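/- arXiv:2209.14181 — 3 statements merged into one kernel-verified Lean document; each statement's English description precedes it below -/
import Mathlib

section
/- Suppose a sequence of linear estimators θ̂_n = Σ_i Y_i ω_i(d) with sup_n Σ_i √Var(ω_i(d)) < ∞, paired with a sequence of cluster-randomized designs with parameter p, satisfies θ̂_n − θ_n = O_p(a_n) for every choice of potential outcomes satisfying geometric interference (constants K₁, η), bounded outcomes |Y_i(d)| ≤ Ȳ, and linearity, where a_n → 0. Then for every ε ∈ (0, 1/η) and every δ > 0, (1/n)·Σ_{i=1}^n 1{ φ_n(i, a_n^{−1/η+ε}) ≥ a_n^{−δ} } → 0 as n → ∞. -/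
/-!
Suppose a fraction `β` of the units have `φ_n(i,s) ≥ a_n^{-δ}`, where `s = a_n^{-1/η+ε}`. Give each
of them the outcome `c (F_i(d) - 𝔼 F_i)`, where `F_i` is the share of treated clusters among those
meeting `𝒩_n(i,s)` and `c = min(K₁ a_n^{1-εη}, Ȳ) = min(K₁ s^{-η}, Ȳ)`. It is linear and bounded,
and it satisfies geometric interference because it only reacts within radius `s`. Its global
effect is `c β`, while by Cauchy–Schwarz the estimator has mean absolute value at most
`c a_n^{δ/2}` times the total mean weight plus the total standard deviation of the weights, since
`Var F_i ≤ 1 / φ_n(i,s) ≤ a_n^δ`. The total mean weight is bounded by applying the rate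
assumption to the constant outcomes `Ȳ sign 𝔼 ω_i`. Since `a_n = o(c)`, the rate assumption for
the adversarial outcome then forces `β → 0`.
-/

open MeasureTheory ProbabilityTheory Filter
open scoped ENNReal NNReal BigOperators Classical Topology

noncomputable section

namespace AGEPaper

variable {n C : ℕ}

/-- The `s`-neighborhood of unit `i`: all units within distance `s`. -/
def nbhd (ρ : Fin n → Fin n → ℝ) (i : Fin n) (s : ℝ) : Finset (Fin n) :=
  Finset.univ.filter fun j => ρ i j ≤ s

/-- A valid distance function: `ρ i i = 0` and `ρ i j > 0` for `i ≠ j`. -/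
def DistOK (ρ : Fin n → Fin n → ℝ) : Prop :=
  (∀ i, ρ i i = 0) ∧ ∀ i j : Fin n, i ≠ j → 0 < ρ i j

/-- The largest (dis)saturated neighborhood radius of unit `i` under treatment `d`. -/
def stilde (ρ : Fin n → Fin n → ℝ) (d : Fin n → Bool) (i : Fin n) : ℝ :=
  sSup {s : ℝ | 0 < s ∧
    ((∀ j ∈ nbhd ρ i s, d j = true) ∨ (∀ j ∈ nbhd ρ i s, d j = false))}

/-- The average global effect. -/
def age (Y : Fin n → (Fin n → Bool) → ℝ) : ℝ :=
  (∑ i, (Y i (fun _ => true) - Y i (fun _ => false))) / n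

/-- Geometric interference with constants `K₁, η`. -/
def GeomInterf (ρ : Fin n → Fin n → ℝ) (K₁ η : ℝ)
    (Y : Fin n → (Fin n → Bool) → ℝ) : Prop :=
  ∀ (i : Fin n) (d : Fin n → Bool),
    |Y i d - (if d i then Y i (fun _ => true) else Y i (fun _ => false))| ≤
      K₁ * stilde ρ d i ^ (-η)

/-- Linearity of potential outcomes: the effect of disjoint treatment vectors is additive. -/
def LinearPO (Y : Fin n → (Fin n → Bool) → ℝ) : Prop :=
  ∀ d d' : Fin n → Bool, (∀ i, ¬(d i = true ∧ d' i = true)) →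
    ∀ i, Y i (fun j => d j || d' j) - Y i (fun _ => false) =
      Y i d + Y i d' - 2 * Y i (fun _ => false)

/-- Packing assumption with constant `K₃`: any `s`-packing has at most `K₃ n / s` members. -/
def Packing (ρ : Fin n → Fin n → ℝ) (K₃ : ℝ) : Prop :=
  ∀ s : ℝ, 0 < s → ∀ Q : Finset (Fin n),
    (∀ i : Fin n, (Q.filter fun j => ρ i j ≤ s).card ≤ 1) →
    (Q.card : ℝ) ≤ K₃ * n / s

/-- Bounded density with constant `K₆`. -/
def BoundedDensity (ρ : Fin n → Fin n → ℝ) (K₆ : ℝ) : Prop :=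
  ∀ s : ℝ, 0 < s → ∀ i : Fin n, ((nbhd ρ i s).card : ℝ) ≤ K₆ * s + 1

/-- `J` is an `s`-cover of the finite set `A`. -/
def CoversWith (ρ : Fin n → Fin n → ℝ) (s : ℝ) (J A : Finset (Fin n)) : Prop :=
  ∀ a ∈ A, ∃ j ∈ J, a ∈ nbhd ρ j s

/-- `𝒰(A,s)`: union of the `s`-neighborhoods of members of `A`. -/
def setU (ρ : Fin n → Fin n → ℝ) (A : Finset (Fin n)) (s : ℝ) : Finset (Fin n) :=
  A.biUnion fun i => nbhd ρ i s

/-- `𝒱(A,s)`: units whose `s`-neighborhood intersects `A`. -/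
def setV (ρ : Fin n → Fin n → ℝ) (A : Finset (Fin n)) (s : ℝ) : Finset (Fin n) :=
  Finset.univ.filter fun j => ∃ a ∈ A, a ∈ nbhd ρ j s

/-- Bounded covering numbers with function `lam`. -/
def BoundedCovering (ρ : Fin n → Fin n → ℝ) (lam : ℝ → ℝ) : Prop :=
  ∀ α s : ℝ, 0 < α → 0 < s → ∀ i : Fin n,
    (∃ J : Finset (Fin n), (J.card : ℝ) ≤ lam α ∧
      CoversWith ρ s J (setU ρ (nbhd ρ i s) (α * s))) ∧
    (∃ J : Finset (Fin n), (J.card : ℝ) ≤ lam α ∧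
      CoversWith ρ s J (setV ρ (nbhd ρ i (α * s)) (α * s)))

/-- `U` is a `g`-cover of the population. -/
def IsCover (ρ : Fin n → Fin n → ℝ) (g : ℝ) (U : Finset (Fin n)) : Prop :=
  ∀ i : Fin n, ∃ u ∈ U, i ∈ nbhd ρ u g

/-- `U` is a minimal `g`-cover of the population. -/
def IsMinimalCover (ρ : Fin n → Fin n → ℝ) (g : ℝ) (U : Finset (Fin n)) : Prop :=
  IsCover ρ g U ∧ ∀ V : Finset (Fin n), IsCover ρ g V → U.card ≤ V.card

/-- The cluster assignment `cl` arises from the Scaling Clusters design with radius `g`: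
clusters are neighborhoods of an ordered minimal `g`-cover, minus previously assigned units. -/
def IsScalingClusters (ρ : Fin n → Fin n → ℝ) (g : ℝ) (cl : Fin n → Fin C) : Prop :=
  ∃ u : Fin C → Fin n, Function.Injective u ∧
    IsMinimalCover ρ g (Finset.image u Finset.univ) ∧
    ∀ i : Fin n, i ∈ nbhd ρ (u (cl i)) g ∧ ∀ k : Fin C, k < cl i → i ∉ nbhd ρ (u k) g

/-- The Bernoulli(p) measure on `Bool` (for `0 ≤ p ≤ 1`). -/
def bern (p : ℝ) : Measure Bool :=
  (PMF.bernoulli (min (Real.toNNReal p) 1) (min_le_right _ _)).toMeasure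

instance (p : ℝ) : IsProbabilityMeasure (bern p) :=
  PMF.toMeasure.isProbabilityMeasure _

/-- The design measure: i.i.d. Bernoulli(p) cluster-level treatments. -/
def designMeasure (C : ℕ) (p : ℝ) : Measure (Fin C → Bool) :=
  Measure.pi fun _ => bern p

instance (C : ℕ) (p : ℝ) : IsProbabilityMeasure (designMeasure C p) := by
  unfold designMeasure; infer_instance

/-- Unit-level treatments induced by cluster-level treatments. -/
def dvec (cl : Fin n → Fin C) (x : Fin C → Bool) : Fin n → Bool := fun i => x (cl i)

/-- `φ_n(i,s)`: number of clusters intersecting the `s`-neighborhood of `i`. -/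
def phi (ρ : Fin n → Fin n → ℝ) (cl : Fin n → Fin C) (i : Fin n) (s : ℝ) : ℕ :=
  (Finset.univ.filter fun c : Fin C => ∃ j ∈ nbhd ρ i s, cl j = c).card

/-- `φ_n(s)`: maximum of `φ_n(i,s)` over the population. -/
def phiMax (ρ : Fin n → Fin n → ℝ) (cl : Fin n → Fin C) (s : ℝ) : ℕ :=
  Finset.univ.sup fun i : Fin n => phi ρ cl i s

/-- `γ_n(c,s)`: number of units whose `s`-neighborhood intersects cluster `c`. -/
def gam (ρ : Fin n → Fin n → ℝ) (cl : Fin n → Fin C) (c : Fin C) (s : ℝ) : ℕ :=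
  (Finset.univ.filter fun i : Fin n => ∃ j ∈ nbhd ρ i s, cl j = c).card

/-- All members of the `κ`-neighborhood of `i` have treatment status `t`. -/
def allTreat (ρ : Fin n → Fin n → ℝ) (cl : Fin n → Fin C) (κ : ℝ) (i : Fin n)
    (t : Bool) (x : Fin C → Bool) : Prop :=
  ∀ j ∈ nbhd ρ i κ, x (cl j) = t

/-- Indicator `T_{it}` that the `κ`-neighborhood of `i` is fully (dis)saturated. -/
def Tind (ρ : Fin n → Fin n → ℝ) (cl : Fin n → Fin C) (κ : ℝ) (i : Fin n)
    (t : Bool) (x : Fin C → Bool) : ℝ :=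
  if allTreat ρ cl κ i t x then 1 else 0

/-- `P(T_{it} = 1)` under the design. -/
def probT (ρ : Fin n → Fin n → ℝ) (cl : Fin n → Fin C) (p κ : ℝ) (i : Fin n)
    (t : Bool) : ℝ :=
  (designMeasure C p {x | allTreat ρ cl κ i t x}).toReal

/-- The Horvitz–Thompson estimator. -/
def htEst (ρ : Fin n → Fin n → ℝ) (cl : Fin n → Fin C) (p κ : ℝ)
    (Y : Fin n → (Fin n → Bool) → ℝ) (x : Fin C → Bool) : ℝ :=
  (∑ i, Y i (dvec cl x) * (Tind ρ cl κ i true x / probT ρ cl p κ i true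
      - Tind ρ cl κ i false x / probT ρ cl p κ i false)) / n

/-- The Hajek estimator (ratios with zero denominators are `0`). -/
def hajekEst (ρ : Fin n → Fin n → ℝ) (cl : Fin n → Fin C) (p κ : ℝ)
    (Y : Fin n → (Fin n → Bool) → ℝ) (x : Fin C → Bool) : ℝ :=
  (∑ i, Y i (dvec cl x) * Tind ρ cl κ i true x / probT ρ cl p κ i true) /
      (∑ k, Tind ρ cl κ k true x / probT ρ cl p κ k true)
    - (∑ i, Y i (dvec cl x) * Tind ρ cl κ i false x / probT ρ cl p κ i false) /
      (∑ k, Tind ρ cl κ k false x / probT ρ cl p κ k false)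

/-- The Horvitz–Thompson estimator with explicit power denominators. -/
def htEstP (ρ : Fin n → Fin n → ℝ) (cl : Fin n → Fin C) (p κ : ℝ)
    (Y : Fin n → (Fin n → Bool) → ℝ) (x : Fin C → Bool) : ℝ :=
  (∑ i, Y i (dvec cl x) * (Tind ρ cl κ i true x / p ^ phi ρ cl i κ
      - Tind ρ cl κ i false x / (1 - p) ^ phi ρ cl i κ)) / n

/-- The oracle estimator `θ̃_{n,κ}`. -/
def oracle (ρ : Fin n → Fin n → ℝ) (cl : Fin n → Fin C) (p κ : ℝ)
    (Y : Fin n → (Fin n → Bool) → ℝ) (x : Fin C → Bool) : ℝ :=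
  (∑ i, (Y i (fun _ => true) * Tind ρ cl κ i true x / p ^ phi ρ cl i κ
      - Y i (fun _ => false) * Tind ρ cl κ i false x / (1 - p) ^ phi ρ cl i κ)) / n

/-- The exposure `D_i`: mean treatment status among clusters intersecting `𝒩(i,κ)`. -/
def exposure (ρ : Fin n → Fin n → ℝ) (cl : Fin n → Fin C) (κ : ℝ)
    (x : Fin C → Bool) (i : Fin n) : ℝ :=
  (∑ c : Fin C, (if x c then (1 : ℝ) else 0) *
      (if ∃ j ∈ nbhd ρ i κ, cl j = c then (1 : ℝ) else 0)) / phiMax ρ cl κ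

/-- Sample mean of a vector. -/
def mean (v : Fin n → ℝ) : ℝ := (∑ i, v i) / n

/-- The OLS estimator: coefficient of a regression of outcomes on exposures. -/
def olsEst (ρ : Fin n → Fin n → ℝ) (cl : Fin n → Fin C) (κ : ℝ)
    (Y : Fin n → (Fin n → Bool) → ℝ) (x : Fin C → Bool) : ℝ :=
  ((∑ i, exposure ρ cl κ x i * Y i (dvec cl x)) / n
      - mean (exposure ρ cl κ x) * mean (fun i => Y i (dvec cl x))) /
  ((∑ i, exposure ρ cl κ x i * exposure ρ cl κ x i) / n
      - mean (exposure ρ cl κ x) ^ 2)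

/-- The exposure guess `D̃ = Â d`. -/
def exposureGuess (Ahat : Fin n → Fin n → ℝ) (cl : Fin n → Fin C)
    (x : Fin C → Bool) (i : Fin n) : ℝ :=
  ∑ j, Ahat i j * (if x (cl j) then (1 : ℝ) else 0)

/-- The shrinkage (2SLS) estimator: the ratio of the empirical covariance of `D` and `Y`
to the empirical covariance of `D` and `D̃`, multiplied by `𝟏'Â𝟏/n`. -/
def shrinkEst (ρ : Fin n → Fin n → ℝ) (cl : Fin n → Fin C) (κ : ℝ)
    (Ahat : Fin n → Fin n → ℝ) (Y : Fin n → (Fin n → Bool) → ℝ)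
    (x : Fin C → Bool) : ℝ :=
  (((∑ i, exposure ρ cl κ x i * Y i (dvec cl x)) / n
      - mean (exposure ρ cl κ x) * mean (fun i => Y i (dvec cl x))) /
   ((∑ i, exposure ρ cl κ x i * exposureGuess Ahat cl x i) / n
      - mean (exposure ρ cl κ x) * mean (exposureGuess Ahat cl x))) *
  ((∑ i, ∑ j, Ahat i j) / n)

/-- The off-neighborhood part of a spillover matrix at radius `s`. -/
def offPart (ρ : Fin n → Fin n → ℝ) (s : ℝ) (A : Fin n → Fin n → ℝ) :
    Fin n → Fin n → ℝ :=
  fun i j => if j ∈ nbhd ρ i s then 0 else A i j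

/-- `X_n = O_p(a_n)`: for every `ε > 0` there is `M > 0` with
`limsup_n P(|X_n| > M a_n) ≤ ε`. -/
def IsBigOp {Ω : ℕ → Type} [∀ m, MeasurableSpace (Ω m)]
    (μ : ∀ m, Measure (Ω m)) (X : ∀ m, Ω m → ℝ) (a : ℕ → ℝ) : Prop :=
  ∀ ε : ℝ, 0 < ε → ∃ M : ℝ, 0 < M ∧
    Filter.limsup (fun m => (μ m {x | M * a m < |X m x|}).toReal) Filter.atTop ≤ ε

lemma mem_nbhd {ρ : Fin n → Fin n → ℝ} {i j : Fin n} {s : ℝ} :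
    j ∈ nbhd ρ i s ↔ ρ i j ≤ s := by
  simp [nbhd]

lemma self_mem_nbhd {ρ : Fin n → Fin n → ℝ} (hρ : DistOK ρ) (i : Fin n) {s : ℝ} (hs : 0 ≤ s) :
    i ∈ nbhd ρ i s :=
  mem_nbhd.2 (by rw [hρ.1 i]; exact hs)

lemma nbhd_mono {ρ : Fin n → Fin n → ℝ} {i : Fin n} {s s' : ℝ} (h : s ≤ s') :
    nbhd ρ i s ⊆ nbhd ρ i s' :=
  fun _ hj => mem_nbhd.2 ((mem_nbhd.1 hj).trans h)

lemma exists_pos_nbhd_subset_singleton {ρ : Fin n → Fin n → ℝ} (hρ : DistOK ρ) (i : Fin n) :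
    ∃ s > 0, nbhd ρ i s ⊆ {i} := by
  have hfar : ∀ j, ∀ᶠ s in 𝓝[>] (0 : ℝ), j ≠ i → s < ρ i j := fun j => by
    by_cases hj : j = i
    · simp [hj]
    · exact ((eventually_lt_nhds (hρ.2 i j (Ne.symm hj))).filter_mono nhdsWithin_le_nhds).mono
        fun _ h _ => h
  obtain ⟨s, hs, hsmall⟩ := (eventually_mem_nhdsWithin.and (eventually_all.2 hfar)).exists
  refine ⟨s, hs, fun j hj => Finset.mem_singleton.2 ?_⟩
  by_contra hji
  exact (mem_nbhd.1 hj).not_gt (hsmall j hji)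

def affineOutcome (g : Fin n → ℝ) (A : Fin n → Fin n → ℝ) : Fin n → (Fin n → Bool) → ℝ :=
  fun i d => g i + ∑ j, A i j * (if d j then 1 else 0)

lemma linearPO_affineOutcome (g : Fin n → ℝ) (A : Fin n → Fin n → ℝ) :
    LinearPO (affineOutcome g A) := by
  intro d d' hdisj i
  have hor : ∀ j, (if (d j || d' j) then (1 : ℝ) else 0) =
      (if d j then 1 else 0) + (if d' j then 1 else 0) := fun j => by
    have := hdisj j
    cases hd : d j <;> cases hd' : d' j <;> simp_all
  simp only [affineOutcome, hor, mul_add, Finset.sum_add_distrib, Bool.false_eq_true, if_false,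
    mul_zero, Finset.sum_const_zero]
  ring

lemma affineOutcome_mem_Icc {A : Fin n → Fin n → ℝ} (hA : ∀ i j, 0 ≤ A i j) (g : Fin n → ℝ)
    (i : Fin n) (d : Fin n → Bool) :
    affineOutcome g A i d ∈ Set.Icc (g i) (g i + ∑ j, A i j) := by
  refine ⟨le_add_of_nonneg_right (Finset.sum_nonneg fun j _ => ?_),
    add_le_add le_rfl (Finset.sum_le_sum fun j _ => ?_)⟩
  · exact mul_nonneg (hA i j) (by split <;> norm_num)
  · exact mul_le_of_le_one_right (hA i j) (by split <;> norm_num)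

lemma affineOutcome_eq_of_forall_mem_nbhd {ρ : Fin n → Fin n → ℝ} {s : ℝ}
    {A : Fin n → Fin n → ℝ} {i : Fin n} (hA : ∀ j ∉ nbhd ρ i s, A i j = 0) (g : Fin n → ℝ)
    {d : Fin n → Bool} {t : Bool} (hd : ∀ j ∈ nbhd ρ i s, d j = t) :
    affineOutcome g A i d = affineOutcome g A i (fun _ => t) := by
  refine congrArg (g i + ·) (Finset.sum_congr rfl fun j _ => ?_)
  by_cases hj : j ∈ nbhd ρ i s
  · rw [hd j hj]
  · simp [hA j hj]

lemma age_affineOutcome (g : Fin n → ℝ) (A : Fin n → Fin n → ℝ) :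
    age (affineOutcome g A) = (∑ i, ∑ j, A i j) / n := by
  simp [age, affineOutcome]

/-- Either `𝒩(i,s)` is saturated under `d`, and then `Y(d)` is the saturated outcome, or
`s̃ ≤ s` and the deviation is at most `∑ⱼ A i j ≤ K₁ s^{-η} ≤ K₁ s̃^{-η}`. -/
lemma geomInterf_affineOutcome {ρ : Fin n → Fin n → ℝ} (hρ : DistOK ρ) {K₁ η s : ℝ}
    (hs : 0 < s) (hη : 0 ≤ η) {A : Fin n → Fin n → ℝ} (hA : ∀ i j, 0 ≤ A i j)
    (hsupp : ∀ i, ∀ j ∉ nbhd ρ i s, A i j = 0) (hrow : ∀ i, ∑ j, A i j ≤ K₁ * s ^ (-η))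
    (g : Fin n → ℝ) : GeomInterf ρ K₁ η (affineOutcome g A) := by
  intro i d
  have hK₁ : 0 ≤ K₁ := (mul_nonneg_iff_of_pos_right (Real.rpow_pos_of_pos hs _)).1
    ((Finset.sum_nonneg fun j _ => hA i j).trans (hrow i))
  have hsat : (if d i then affineOutcome g A i (fun _ => true)
      else affineOutcome g A i (fun _ => false)) = affineOutcome g A i (fun _ => d i) := by
    cases d i <;> rfl
  rw [hsat]
  set S := {s' : ℝ | 0 < s' ∧
    ((∀ j ∈ nbhd ρ i s', d j = true) ∨ (∀ j ∈ nbhd ρ i s', d j = false))}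
  by_cases hbig : ∃ s' ∈ S, s ≤ s'
  · obtain ⟨s', ⟨hs', hall⟩, hss'⟩ := hbig
    have hconst : ∀ j ∈ nbhd ρ i s, d j = d i := fun j hj => by
      have hi := self_mem_nbhd hρ i hs'.le
      have hj' := nbhd_mono hss' hj
      rcases hall with h | h <;> rw [h j hj', h i hi]
    rw [affineOutcome_eq_of_forall_mem_nbhd (hsupp i) g hconst, sub_self, abs_zero]
    exact mul_nonneg hK₁ (Real.rpow_nonneg (Real.sSup_nonneg fun _ h => h.1.le) _)
  · push Not at hbig
    obtain ⟨s₀, hs₀, hsingle⟩ := exists_pos_nbhd_subset_singleton hρ i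
    have hs₀S : s₀ ∈ S := ⟨hs₀, by
      cases hdi : d i
      · exact Or.inr fun j hj => by rw [Finset.mem_singleton.1 (hsingle hj), hdi]
      · exact Or.inl fun j hj => by rw [Finset.mem_singleton.1 (hsingle hj), hdi]⟩
    have hle : stilde ρ d i ≤ s := csSup_le ⟨s₀, hs₀S⟩ fun s' h => (hbig s' h).le
    have hpos : 0 < stilde ρ d i :=
      hs₀.trans_le (le_csSup ⟨s, fun s' h => (hbig s' h).le⟩ hs₀S)
    have h₁ := affineOutcome_mem_Icc hA g i d
    have h₂ := affineOutcome_mem_Icc hA g i (fun _ => d i)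
    calc |affineOutcome g A i d - affineOutcome g A i (fun _ => d i)| ≤ ∑ j, A i j := by
          rw [abs_sub_le_iff]; constructor <;> linarith [h₁.1, h₁.2, h₂.1, h₂.2]
      _ ≤ K₁ * s ^ (-η) := hrow i
      _ ≤ K₁ * stilde ρ d i ^ (-η) :=
          mul_le_mul_of_nonneg_left (Real.rpow_le_rpow_of_nonpos hpos hle (neg_nonpos.2 hη)) hK₁

def clusterReps (ρ : Fin n → Fin n → ℝ) (cl : Fin n → Fin C) (i : Fin n) (s : ℝ) :
    Finset (Fin n) :=
  {j ∈ nbhd ρ i s | ∀ k ∈ nbhd ρ i s, cl k = cl j → j ≤ k}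

section ClusterReps

variable {ρ : Fin n → Fin n → ℝ} {cl : Fin n → Fin C} {i : Fin n} {s : ℝ}

lemma clusterReps_subset_nbhd : clusterReps ρ cl i s ⊆ nbhd ρ i s :=
  Finset.filter_subset _ _

lemma injOn_clusterReps : Set.InjOn cl (clusterReps ρ cl i s) := by
  intro j hj k hk hjk
  simp only [clusterReps, Finset.coe_filter, Set.mem_ofPred_eq] at hj hk
  exact le_antisymm (hj.2 k hk.1 hjk.symm) (hk.2 j hj.1 hjk)

lemma image_clusterReps : (clusterReps ρ cl i s).image cl = (nbhd ρ i s).image cl := by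
  refine (Finset.image_subset_image clusterReps_subset_nbhd).antisymm fun c hc => ?_
  obtain ⟨j, hj, rfl⟩ := Finset.mem_image.1 hc
  set fiber := (nbhd ρ i s).filter (cl · = cl j)
  have hne : fiber.Nonempty := ⟨j, Finset.mem_filter.2 ⟨hj, rfl⟩⟩
  obtain ⟨hk, hkj⟩ := Finset.mem_filter.1 (fiber.min'_mem hne)
  refine Finset.mem_image.2 ⟨fiber.min' hne, Finset.mem_filter.2 ⟨hk, fun k hk' hkc => ?_⟩, hkj⟩
  exact fiber.min'_le _ (Finset.mem_filter.2 ⟨hk', hkc.trans hkj⟩)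

lemma sum_clusterReps {M : Type*} [AddCommMonoid M] (f : Fin C → M) :
    ∑ j ∈ clusterReps ρ cl i s, f (cl j) = ∑ c ∈ (nbhd ρ i s).image cl, f c := by
  rw [← image_clusterReps, Finset.sum_image injOn_clusterReps]

lemma phi_eq_card_image : phi ρ cl i s = ((nbhd ρ i s).image cl).card := by
  simp only [phi]
  congr 1
  ext c
  simp

lemma card_clusterReps : (clusterReps ρ cl i s).card = phi ρ cl i s := by
  rw [phi_eq_card_image, ← image_clusterReps, Finset.card_image_of_injOn injOn_clusterReps]

lemma phi_pos (hρ : DistOK ρ) (hs : 0 ≤ s) : 0 < phi ρ cl i s := by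
  rw [phi_eq_card_image]
  exact (Finset.image_nonempty.2 ⟨i, self_mem_nbhd hρ i hs⟩).card_pos

end ClusterReps

def trueShare {ι : Type*} (Φ : Finset ι) (x : ι → Bool) : ℝ :=
  (∑ c ∈ Φ, if x c then 1 else 0) / Φ.card

lemma trueShare_mem_Icc {ι : Type*} (Φ : Finset ι) (x : ι → Bool) :
    trueShare Φ x ∈ Set.Icc 0 1 := by
  rw [trueShare, Finset.sum_boole]
  exact ⟨by positivity, div_le_one_of_le₀ (by exact_mod_cast Finset.card_filter_le _ _)
    (Nat.cast_nonneg _)⟩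

lemma variance_trueShare_le {ι : Type*} [Fintype ι] (μ : ι → Measure Bool)
    [∀ c, IsProbabilityMeasure (μ c)] (Φ : Finset ι) :
    Var[trueShare Φ; Measure.pi μ] ≤ 1 / (4 * Φ.card) := by
  set X : ι → Bool → ℝ := fun c b => if c ∈ Φ ∧ b then 1 else 0
  have hshare : trueShare Φ = fun x => (Φ.card : ℝ)⁻¹ * (∑ c, fun x => X c (x c)) x := by
    ext x
    simp only [trueShare, Finset.sum_apply, X, ite_and, Finset.sum_ite_mem, Finset.univ_inter]
    ring
  have hX : ∀ c, Var[X c; μ c] ≤ if c ∈ Φ then 1 / 4 else 0 := fun c => by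
    by_cases hc : c ∈ Φ
    · rw [if_pos hc]
      refine (variance_le_sq_of_bounded (a := 0) (b := 1) (.of_forall fun b => ?_)
        (measurable_of_finite (X c)).aemeasurable).trans (by norm_num)
      cases b <;> simp [X, hc]
    · simp only [hc, if_false, X, false_and]
      exact (variance_zero _).le
  rw [hshare, variance_const_mul, variance_sum_pi fun c => MemLp.of_discrete]
  calc (Φ.card : ℝ)⁻¹ ^ 2 * ∑ c, Var[X c; μ c]
      ≤ (Φ.card : ℝ)⁻¹ ^ 2 * ∑ c, if c ∈ Φ then 1 / 4 else 0 :=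
        mul_le_mul_of_nonneg_left (Finset.sum_le_sum fun c _ => hX c) (sq_nonneg _)
    _ = 1 / (4 * Φ.card) := by
        rw [Finset.sum_ite_mem, Finset.univ_inter, Finset.sum_const, nsmul_eq_mul]
        rcases eq_or_ne (Φ.card : ℝ) 0 with h | h
        · simp [h]
        · field_simp

section Probability

variable {Ω : Type*} [MeasurableSpace Ω] {μ : Measure Ω}

lemma integral_abs_mul_le_sqrt_mul_sqrt {f g : Ω → ℝ} (hf : MemLp f 2 μ) (hg : MemLp g 2 μ) :
    ∫ x, |f x * g x| ∂μ ≤ √(∫ x, f x ^ 2 ∂μ) * √(∫ x, g x ^ 2 ∂μ) := by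
  have h := integral_mul_le_Lp_mul_Lq_of_nonneg Real.HolderConjugate.two_two
    (.of_forall fun x => abs_nonneg (f x)) (.of_forall fun x => abs_nonneg (g x))
    (by simpa [Real.norm_eq_abs] using hf.norm) (by simpa [Real.norm_eq_abs] using hg.norm)
  simpa only [abs_mul, Real.rpow_two, sq_abs, ← Real.sqrt_eq_rpow] using h

variable [IsProbabilityMeasure μ]

lemma integral_abs_sub_integral_le_sqrt_variance {f : Ω → ℝ} (hf : MemLp f 2 μ) :
    ∫ x, |f x - μ[f]| ∂μ ≤ √Var[f; μ] := by
  simpa [variance_eq_integral hf.aemeasurable] using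
    integral_abs_mul_le_sqrt_mul_sqrt (hf.sub (memLp_const μ[f])) (memLp_const (1 : ℝ))

lemma integral_abs_sub_integral_mul_le {f g : Ω → ℝ} (hf : MemLp f 2 μ) (hg : MemLp g 2 μ) :
    ∫ x, |(f x - μ[f]) * g x| ∂μ ≤ √Var[f; μ] * (|μ[g]| + √Var[g; μ]) := by
  have hf' : MemLp (fun x => f x - μ[f]) 2 μ := hf.sub (memLp_const _)
  have hg' : MemLp (fun x => g x - μ[g]) 2 μ := hg.sub (memLp_const _)
  have hint₁ : Integrable (fun x => |f x - μ[f]| * |μ[g]|) μ :=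
    (hf'.integrable one_le_two).abs.mul_const _
  have hint₂ : Integrable (fun x => |(f x - μ[f]) * (g x - μ[g])|) μ :=
    (hf'.integrable_mul hg').abs
  calc ∫ x, |(f x - μ[f]) * g x| ∂μ
      ≤ ∫ x, (|f x - μ[f]| * |μ[g]| + |(f x - μ[f]) * (g x - μ[g])|) ∂μ := by
        refine integral_mono_of_nonneg (.of_forall fun x => abs_nonneg _) (hint₁.add hint₂)
          (.of_forall fun x => ?_)
        calc |(f x - μ[f]) * g x| = |(f x - μ[f]) * μ[g] + (f x - μ[f]) * (g x - μ[g])| := by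
              ring_nf
          _ ≤ |f x - μ[f]| * |μ[g]| + |(f x - μ[f]) * (g x - μ[g])| := by
              rw [← abs_mul]; exact abs_add_le _ _
    _ = (∫ x, |f x - μ[f]| ∂μ) * |μ[g]| + ∫ x, |(f x - μ[f]) * (g x - μ[g])| ∂μ := by
        rw [integral_add hint₁ hint₂, integral_mul_const]
    _ ≤ √Var[f; μ] * |μ[g]| + √Var[f; μ] * √Var[g; μ] := by
        gcongr
        · exact integral_abs_sub_integral_le_sqrt_variance hf
        · simpa [variance_eq_integral hf.aemeasurable, variance_eq_integral hg.aemeasurable] using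
            integral_abs_mul_le_sqrt_mul_sqrt hf' hg'
    _ = √Var[f; μ] * (|μ[g]| + √Var[g; μ]) := by ring

/-- Markov's inequality for `|W|` and a union bound give a point where `|W - b| ≤ u` and
`|W| < t`. -/
lemma abs_lt_of_measureReal_add_integral_div_lt_one {W : Ω → ℝ} (hW : Integrable W μ)
    {b u t : ℝ} (ht : 0 < t) (h : μ.real {x | u < |W x - b|} + (∫ x, |W x| ∂μ) / t < 1) :
    |b| < u + t := by
  have hmarkov : μ.real {x | t ≤ |W x|} ≤ (∫ x, |W x| ∂μ) / t := by
    rw [le_div_iff₀' ht]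
    exact mul_meas_ge_le_integral_of_nonneg (.of_forall fun x => abs_nonneg _) hW.abs t
  have hgood : ({x | u < |W x - b|} ∪ {x | t ≤ |W x|})ᶜ.Nonempty := by
    rw [Set.nonempty_compl]
    intro huniv
    have := measureReal_union_le (μ := μ) {x | u < |W x - b|} {x | t ≤ |W x|}
    rw [huniv, probReal_univ] at this
    linarith
  obtain ⟨x, hx⟩ := hgood
  simp only [Set.mem_compl_iff, Set.mem_union, Set.mem_ofPred_eq, not_or, not_lt, not_le] at hx
  calc |b| = |W x - (W x - b)| := by ring_nf
    _ ≤ |W x| + |W x - b| := abs_sub _ _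
    _ < u + t := by linarith

/-- The statistic has mean `G ∑ᵢ |𝔼 wᵢ|`, and its mean absolute deviation is at most
`G ∑ᵢ sd(wᵢ)`. -/
lemma sum_abs_integral_lt_of_measureReal_lt {ι : Type*} [Fintype ι] {w : Ω → ι → ℝ}
    (hw : ∀ i, MemLp (w · i) 2 μ) {G u B : ℝ} (hG : 0 < G) (hB : ∑ i, √Var[(w · i); μ] ≤ B)
    (h : μ.real {x | u < |∑ i, G * SignType.sign (∫ y, w y i ∂μ) * w x i|} < 1 / 2) :
    ∑ i, |∫ x, w x i ∂μ| < u / G + 2 * B + 1 := by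
  set σ : ι → ℝ := fun i => G * SignType.sign (∫ y, w y i ∂μ)
  have hσ : ∀ i, |σ i| ≤ G := fun i => by
    rcases lt_trichotomy (∫ y, w y i ∂μ) 0 with h | h | h <;> simp [σ, h, abs_of_pos hG, hG.le]
  have hmean : ∑ i, σ i * ∫ x, w x i ∂μ = G * ∑ i, |∫ x, w x i ∂μ| := by
    simp only [σ, Finset.mul_sum, mul_assoc, sign_mul_self]
  have hW : Integrable (fun x => ∑ i, σ i * (w x i - ∫ y, w y i ∂μ)) μ :=
    integrable_finsetSum _ fun i _ => (((hw i).integrable one_le_two).sub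
      (integrable_const _)).const_mul _
  have hint : ∀ i, Integrable (fun x => G * |w x i - ∫ y, w y i ∂μ|) μ := fun i =>
    (((hw i).integrable one_le_two).sub (integrable_const _)).abs.const_mul _
  have hspread : ∫ x, |∑ i, σ i * (w x i - ∫ y, w y i ∂μ)| ∂μ ≤ G * B := by
    calc ∫ x, |∑ i, σ i * (w x i - ∫ y, w y i ∂μ)| ∂μ
        ≤ ∫ x, ∑ i, G * |w x i - ∫ y, w y i ∂μ| ∂μ := by
          refine integral_mono_of_nonneg (.of_forall fun x => abs_nonneg _)
            (integrable_finsetSum _ fun i _ => hint i) (.of_forall fun x => ?_)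
          refine (Finset.abs_sum_le_sum_abs _ _).trans (Finset.sum_le_sum fun i _ => ?_)
          rw [abs_mul]
          exact mul_le_mul_of_nonneg_right (hσ i) (abs_nonneg _)
      _ = G * ∑ i, ∫ x, |w x i - ∫ y, w y i ∂μ| ∂μ := by
          rw [integral_finsetSum _ fun i _ => hint i, Finset.mul_sum]
          simp only [integral_const_mul]
      _ ≤ G * B := mul_le_mul_of_nonneg_left ((Finset.sum_le_sum fun i _ =>
            integral_abs_sub_integral_le_sqrt_variance (hw i)).trans hB) hG.le
  have hB0 : 0 ≤ B := (Finset.sum_nonneg fun i _ => Real.sqrt_nonneg _).trans hB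
  have ht : 0 < G * (2 * B + 1) := by positivity
  have hevent : {x | u < |∑ i, σ i * (w x i - ∫ y, w y i ∂μ) - -(G * ∑ i, |∫ y, w y i ∂μ|)|}
      = {x | u < |∑ i, G * SignType.sign (∫ y, w y i ∂μ) * w x i|} := by
    ext x
    simp only [Set.mem_ofPred_eq, ← hmean, mul_sub, Finset.sum_sub_distrib, sub_neg_eq_add,
      sub_add_cancel, σ]
  have hratio : (∫ x, |∑ i, σ i * (w x i - ∫ y, w y i ∂μ)| ∂μ) / (G * (2 * B + 1)) < 1 / 2 := by
    rw [div_lt_iff₀ ht]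
    linarith
  have key := abs_lt_of_measureReal_add_integral_div_lt_one hW ht (by rw [hevent]; linarith)
  rw [abs_neg, abs_of_nonneg (by positivity)] at key
  have := div_lt_div_of_pos_right key hG
  rwa [mul_div_cancel_left₀ _ hG.ne', add_div, mul_div_cancel_left₀ _ hG.ne', ← add_assoc] at this

end Probability

lemma IsBigOp.exists_eventually_lt {Ω : ℕ → Type} [∀ m, MeasurableSpace (Ω m)]
    {μ : ∀ m, Measure (Ω m)} [∀ m, IsProbabilityMeasure (μ m)] {X : ∀ m, Ω m → ℝ} {a : ℕ → ℝ}
    (h : IsBigOp μ X a) {ε : ℝ} (hε : 0 < ε) :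
    ∃ M, 0 < M ∧ ∀ᶠ m in atTop, (μ m).real {x | M * a m < |X m x|} < ε := by
  obtain ⟨M, hM, hlim⟩ := h (ε / 2) (half_pos hε)
  exact ⟨M, hM, eventually_lt_of_limsup_lt (hlim.trans_lt (half_lt_self hε))
    (isBoundedUnder_of ⟨1, fun m => measureReal_le_one⟩)⟩

lemma eventually_sum_abs_integral_le {Ω : ℕ → Type} [∀ m, MeasurableSpace (Ω m)]
    {μ : ∀ m, Measure (Ω m)} [∀ m, IsProbabilityMeasure (μ m)] {ι : ℕ → Type*}
    [∀ m, Fintype (ι m)] {W : ∀ m, Ω m → ι m → ℝ} (hW : ∀ m i, MemLp (W m · i) 2 (μ m))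
    {G B : ℝ} (hG : 0 < G) (hB : ∀ m, ∑ i, √Var[(W m · i); μ m] ≤ B) {a : ℕ → ℝ}
    (ha : Tendsto a atTop (𝓝 0))
    (h : IsBigOp μ (fun m x => ∑ i, G * SignType.sign (∫ y, W m y i ∂μ m) * W m x i) a) :
    ∃ B', ∀ᶠ m in atTop, ∑ i, |∫ x, W m x i ∂μ m| ≤ B' := by
  obtain ⟨M, hM, hprob⟩ := h.exists_eventually_lt one_half_pos
  refine ⟨M / G + 2 * B + 1, ?_⟩
  filter_upwards [hprob, ha.eventually (ge_mem_nhds one_pos)] with m hm ha1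
  refine (sum_abs_integral_lt_of_measureReal_lt (hW m) hG (hB m) hm).le.trans ?_
  gcongr
  exact mul_le_of_le_one_right hM.le ha1

lemma eventually_mul_le_min_mul_rpow {α : Type*} {l : Filter α} {a : α → ℝ}
    (ha : Tendsto a l (𝓝 0)) (hapos : ∀ x, 0 < a x) {θ K Y L : ℝ} (hθ : 0 < θ) (hK : 0 < K)
    (hY : 0 < Y) (hL : 0 < L) :
    ∀ᶠ x in l, L * a x ≤ min (K * a x ^ (1 - θ)) Y := by
  have hθ₀ : Tendsto (fun x => a x ^ θ) l (𝓝 0) := by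
    simpa [Real.zero_rpow hθ.ne'] using ha.rpow_const (Or.inr hθ.le)
  filter_upwards [hθ₀.eventually (gt_mem_nhds (div_pos hK hL)),
    ha.eventually (gt_mem_nhds (div_pos hY hL))] with x hθx hx
  refine le_min ?_ ((lt_div_iff₀' hL).1 hx).le
  calc L * a x = L * a x ^ θ * a x ^ (1 - θ) := by
        rw [mul_assoc, ← Real.rpow_add (hapos x), add_sub_cancel, Real.rpow_one]
    _ ≤ K * a x ^ (1 - θ) :=
        mul_le_mul_of_nonneg_right ((lt_div_iff₀' hL).1 hθx).le (Real.rpow_nonneg (hapos x).le _)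

def signOutcome {Ω : Type*} [MeasurableSpace Ω] (μ : Measure Ω) (G : ℝ) (W : Ω → Fin n → ℝ) :
    Fin n → (Fin n → Bool) → ℝ :=
  affineOutcome (fun i => G * SignType.sign (∫ x, W x i ∂μ)) 0

section SignOutcome

variable {Ω : Type*} [MeasurableSpace Ω] {μ : Measure Ω} {G : ℝ} {W : Ω → Fin n → ℝ}

lemma signOutcome_apply (i : Fin n) (d : Fin n → Bool) :
    signOutcome μ G W i d = G * SignType.sign (∫ x, W x i ∂μ) := by
  simp [signOutcome, affineOutcome]

lemma geomInterf_signOutcome {ρ : Fin n → Fin n → ℝ} (hρ : DistOK ρ) {K₁ η : ℝ} (hη : 0 ≤ η)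
    (hK₁ : 0 ≤ K₁) : GeomInterf ρ K₁ η (signOutcome μ G W) :=
  geomInterf_affineOutcome hρ one_pos hη (fun _ _ => le_rfl) (fun _ _ _ => rfl)
    (fun _ => by simpa using hK₁) _

lemma abs_signOutcome_le (hG : 0 ≤ G) (i : Fin n) (d : Fin n → Bool) :
    |signOutcome μ G W i d| ≤ G := by
  rw [signOutcome_apply, abs_mul, abs_of_nonneg hG]
  refine mul_le_of_le_one_right hG ?_
  rcases lt_trichotomy (∫ x, W x i ∂μ) 0 with h | h | h <;> simp [h]

lemma age_signOutcome : age (signOutcome μ G W) = 0 := by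
  simp [age, signOutcome_apply]

end SignOutcome

def adversaryWeights (ρ : Fin n → Fin n → ℝ) (cl : Fin n → Fin C) (s c : ℝ)
    (B : Finset (Fin n)) : Fin n → Fin n → ℝ :=
  fun i j => if i ∈ B ∧ j ∈ clusterReps ρ cl i s then c / phi ρ cl i s else 0

/-- A unit of `B` responds, with amplitude `c`, to the share of treated clusters among those
meeting its `s`-neighborhood, centred at the mean of that share under the design. -/
def adversary (ρ : Fin n → Fin n → ℝ) (cl : Fin n → Fin C) (p s c : ℝ) (B : Finset (Fin n)) :
    Fin n → (Fin n → Bool) → ℝ :=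
  affineOutcome
    (fun i => if i ∈ B then -(c * ∫ x, trueShare ((nbhd ρ i s).image cl) x ∂designMeasure C p)
      else 0)
    (adversaryWeights ρ cl s c B)

section Adversary

variable {ρ : Fin n → Fin n → ℝ} {cl : Fin n → Fin C} {p s c v : ℝ} {B : Finset (Fin n)}

lemma adversaryWeights_nonneg (hc : 0 ≤ c) (i j : Fin n) :
    0 ≤ adversaryWeights ρ cl s c B i j := by
  unfold adversaryWeights
  split <;> positivity

lemma sum_adversaryWeights (hρ : DistOK ρ) (hs : 0 ≤ s) (i : Fin n) :
    ∑ j, adversaryWeights ρ cl s c B i j = if i ∈ B then c else 0 := by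
  have hφ : (phi ρ cl i s : ℝ) ≠ 0 := Nat.cast_ne_zero.2 (phi_pos hρ hs).ne'
  split_ifs with hi
  · simp [adversaryWeights, hi, Finset.sum_ite_mem, card_clusterReps]
    field_simp
  · simp [adversaryWeights, hi]

lemma geomInterf_adversary (hρ : DistOK ρ) {K₁ η : ℝ} (hη : 0 ≤ η) (hs : 0 < s) (hc : 0 ≤ c)
    (hcs : c ≤ K₁ * s ^ (-η)) : GeomInterf ρ K₁ η (adversary ρ cl p s c B) := by
  refine geomInterf_affineOutcome hρ hs hη (adversaryWeights_nonneg hc) (fun i j hj => ?_)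
    (fun i => ?_) _
  · exact if_neg fun h => hj (clusterReps_subset_nbhd h.2)
  · rw [sum_adversaryWeights hρ hs.le]
    split
    · exact hcs
    · exact hc.trans hcs

lemma abs_adversary_le (hρ : DistOK ρ) (hs : 0 ≤ s) (hc : 0 ≤ c) (i : Fin n)
    (d : Fin n → Bool) : |adversary ρ cl p s c B i d| ≤ c := by
  have hq := trueShare_mem_Icc ((nbhd ρ i s).image cl)
  have hmean : ∫ x, trueShare ((nbhd ρ i s).image cl) x ∂designMeasure C p ∈ Set.Icc 0 1 :=
    ⟨integral_nonneg fun x => (hq x).1, (integral_mono Integrable.of_finite (integrable_const 1)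
      fun x => (hq x).2).trans (by simp)⟩
  have h : adversary ρ cl p s c B i d ∈ Set.Icc _ _ :=
    affineOutcome_mem_Icc (adversaryWeights_nonneg hc) _ i d
  rw [sum_adversaryWeights hρ hs] at h
  rw [abs_le]
  split_ifs at h with hi
  · constructor <;> nlinarith [h.1, h.2, hmean.1, hmean.2]
  · constructor <;> linarith [h.1, h.2]

lemma adversary_dvec (i : Fin n) (x : Fin C → Bool) :
    adversary ρ cl p s c B i (dvec cl x) = if i ∈ B then
      c * (trueShare ((nbhd ρ i s).image cl) x -
        ∫ y, trueShare ((nbhd ρ i s).image cl) y ∂designMeasure C p) else 0 := by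
  have hreps : ∑ j ∈ clusterReps ρ cl i s, (if dvec cl x j then (1 : ℝ) else 0) =
      ∑ c ∈ (nbhd ρ i s).image cl, if x c then 1 else 0 :=
    sum_clusterReps fun c => if x c then (1 : ℝ) else 0
  split_ifs with hi
  · simp only [adversary, affineOutcome, adversaryWeights, hi, if_true, true_and, ite_mul,
      zero_mul, Finset.sum_ite_mem, Finset.univ_inter]
    rw [← Finset.mul_sum, hreps, trueShare, phi_eq_card_image]
    ring
  · simp [adversary, affineOutcome, adversaryWeights, hi]

lemma age_adversary (hρ : DistOK ρ) (hs : 0 ≤ s) :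
    age (adversary ρ cl p s c B) = c * B.card / n := by
  rw [adversary, age_affineOutcome]
  simp [sum_adversaryWeights hρ hs, Finset.sum_ite_mem, mul_comm]

/-- The centred cluster share of `i` has standard deviation at most `φ_n(i,s)^{-1/2}`. -/
lemma integral_abs_sum_adversary_mul_le (hρ : DistOK ρ) (hs : 0 ≤ s) (hc : 0 ≤ c)
    (hB : ∀ i ∈ B, (phi ρ cl i s : ℝ)⁻¹ ≤ v) (w : (Fin C → Bool) → Fin n → ℝ) :
    ∫ x, |∑ i, adversary ρ cl p s c B i (dvec cl x) * w x i| ∂designMeasure C p ≤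
      c * √v * (∑ i, |∫ x, w x i ∂designMeasure C p| +
        ∑ i, √Var[(w · i); designMeasure C p]) := by
  set μ := designMeasure C p
  set F : Fin n → (Fin C → Bool) → ℝ := fun i => trueShare ((nbhd ρ i s).image cl)
  have hF : ∀ i ∈ B, √Var[F i; μ] ≤ √v := fun i hi => Real.sqrt_le_sqrt <| by
    have hφ : (0 : ℝ) < phi ρ cl i s := Nat.cast_pos.2 (phi_pos hρ hs)
    calc Var[F i; μ] ≤ 1 / (4 * ((nbhd ρ i s).image cl).card) := variance_trueShare_le _ _
      _ ≤ (phi ρ cl i s : ℝ)⁻¹ := by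
          rw [← phi_eq_card_image, one_div]
          exact inv_anti₀ hφ (by linarith)
      _ ≤ v := hB i hi
  have hint : ∀ i, Integrable (fun x => c * |(F i x - μ[F i]) * w x i|) μ :=
    fun _ => Integrable.of_finite
  calc ∫ x, |∑ i, adversary ρ cl p s c B i (dvec cl x) * w x i| ∂μ
      ≤ ∫ x, ∑ i ∈ B, c * |(F i x - μ[F i]) * w x i| ∂μ := by
        refine integral_mono_of_nonneg (.of_forall fun x => abs_nonneg _)
          (integrable_finsetSum _ fun i _ => hint i) (.of_forall fun x => ?_)
        simp only [adversary_dvec, ite_mul, zero_mul, Finset.sum_ite_mem, Finset.univ_inter]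
        refine (Finset.abs_sum_le_sum_abs _ _).trans_eq (Finset.sum_congr rfl fun i _ => ?_)
        rw [mul_assoc, abs_mul, abs_of_nonneg hc]
    _ = c * ∑ i ∈ B, ∫ x, |(F i x - μ[F i]) * w x i| ∂μ := by
        rw [integral_finsetSum _ fun i _ => hint i, Finset.mul_sum]
        simp only [integral_const_mul]
    _ ≤ c * ∑ i ∈ B, √v * (|∫ x, w x i ∂μ| + √Var[(w · i); μ]) := by
        gcongr with i hi
        exact (integral_abs_sub_integral_mul_le MemLp.of_discrete MemLp.of_discrete).trans
          (mul_le_mul_of_nonneg_right (hF i hi) (by positivity))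
    _ ≤ c * ∑ i, √v * (|∫ x, w x i ∂μ| + √Var[(w · i); μ]) := by
        gcongr
        exact Finset.subset_univ _
    _ = c * √v * (∑ i, |∫ x, w x i ∂μ| + ∑ i, √Var[(w · i); μ]) := by
        rw [← Finset.mul_sum, Finset.sum_add_distrib, mul_assoc]

/-- The adversary's global effect is `c |B| / n`, whereas the estimator itself has mean absolute
value at most `c √v (B₁ + B₂) < c r / 4`. -/
lemma card_div_lt_of_measureReal_lt (hρ : DistOK ρ) (hs : 0 ≤ s) (hc : 0 < c)
    (hB : ∀ i ∈ B, (phi ρ cl i s : ℝ)⁻¹ ≤ v) (w : (Fin C → Bool) → Fin n → ℝ) {B₁ B₂ r u : ℝ}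
    (hmean : ∑ i, |∫ x, w x i ∂designMeasure C p| ≤ B₁)
    (hsd : ∑ i, √Var[(w · i); designMeasure C p] ≤ B₂) (hv : √v * (B₁ + B₂) < r / 4)
    (hu : u ≤ c * r / 4)
    (h : (designMeasure C p).real {x | u < |∑ i, adversary ρ cl p s c B i (dvec cl x) * w x i -
      age (adversary ρ cl p s c B)|} < 1 / 2) :
    (B.card : ℝ) / n < r := by
  have hr : 0 < r := by
    have : 0 ≤ √v * (B₁ + B₂) := mul_nonneg (Real.sqrt_nonneg _)
      (add_nonneg ((Finset.sum_nonneg fun i _ => abs_nonneg _).trans hmean)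
        ((Finset.sum_nonneg fun i _ => Real.sqrt_nonneg _).trans hsd))
    linarith
  have ht : 0 < c * r / 2 := by positivity
  have hratio : (∫ x, |∑ i, adversary ρ cl p s c B i (dvec cl x) * w x i| ∂designMeasure C p) /
      (c * r / 2) < 1 / 2 := by
    rw [div_lt_iff₀ ht]
    calc _ ≤ _ := integral_abs_sum_adversary_mul_le hρ hs hc.le hB w
      _ ≤ c * (√v * (B₁ + B₂)) := by rw [mul_assoc]; gcongr
      _ < c * (r / 4) := by gcongr
      _ = 1 / 2 * (c * r / 2) := by ring
  have key := abs_lt_of_measureReal_add_integral_div_lt_one (μ := designMeasure C p)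
    (W := fun x => ∑ i, adversary ρ cl p s c B i (dvec cl x) * w x i)
    (b := age (adversary ρ cl p s c B)) (u := u) Integrable.of_finite ht (by linarith)
  rw [age_adversary hρ hs, abs_of_nonneg (by positivity), mul_div_assoc] at key
  exact lt_of_mul_lt_mul_left (by linarith) hc.le

end Adversary

theorem subsample_lemma_general
    (η K₁ Ybar p : ℝ)
    (hη : 0 < η) (hK₁ : 0 < K₁) (hYbar : 0 < Ybar)
    (ρ : ∀ m : ℕ, Fin m → Fin m → ℝ) (hρ : ∀ m, DistOK (ρ m))
    (C : ℕ → ℕ) (cl : ∀ m : ℕ, Fin m → Fin (C m))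
    -- linear estimator with weights of uniformly summable standard deviations
    (w : ∀ m : ℕ, (Fin m → Bool) → Fin m → ℝ)
    (hw : ∃ B : ℝ, ∀ m : ℕ,
      ∑ i : Fin m, Real.sqrt (variance
          (fun x : Fin (C m) → Bool => w m (dvec (cl m) x) i)
          (designMeasure (C m) p)) ≤ B)
    -- the rate sequence
    (a : ℕ → ℝ) (hapos : ∀ m, 0 < a m)
    (ha0 : Filter.Tendsto a Filter.atTop (𝓝 0))
    -- O_p(a_n) convergence for every admissible potential outcome sequence
    (hconv : ∀ Y : ∀ m : ℕ, Fin m → (Fin m → Bool) → ℝ,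
      (∀ m, GeomInterf (ρ m) K₁ η (Y m)) →
      (∀ m (i : Fin m) (d : Fin m → Bool), |Y m i d| ≤ Ybar) →
      (∀ m, LinearPO (Y m)) →
      IsBigOp (fun m => designMeasure (C m) p)
        (fun m x => (∑ i, Y m i (dvec (cl m) x) * w m (dvec (cl m) x) i) - age (Y m))
        a) :
    ∀ ε δ : ℝ, 0 < ε → ε < 1 / η → 0 < δ →
      Filter.Tendsto (fun m : ℕ =>
        (∑ i : Fin m, if a m ^ (-δ) ≤ ((phi (ρ m) (cl m) i (a m ^ (-(1 / η) + ε)) : ℝ))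
          then (1 : ℝ) else 0) / m)
        Filter.atTop (𝓝 0) := by
  intro ε δ hε _ hδ
  obtain ⟨B₂, hsd⟩ := hw
  set s : ℕ → ℝ := fun m => a m ^ (-(1 / η) + ε)
  have hs : ∀ m, 0 < s m := fun m => Real.rpow_pos_of_pos (hapos m) _
  set c : ℕ → ℝ := fun m => min (K₁ * a m ^ (1 - ε * η)) Ybar
  have hc : ∀ m, 0 < c m := fun m => lt_min (mul_pos hK₁ (Real.rpow_pos_of_pos (hapos m) _)) hYbar
  have hcs : ∀ m, c m ≤ K₁ * s m ^ (-η) := fun m => by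
    rw [← Real.rpow_mul (hapos m).le, show (-(1 / η) + ε) * -η = 1 - ε * η by field_simp; ring]
    exact min_le_left _ _
  set bad : ∀ m, Finset (Fin m) := fun m => {i | a m ^ (-δ) ≤ (phi (ρ m) (cl m) i (s m) : ℝ)}
  have hbad : ∀ m, ∀ i ∈ bad m, (phi (ρ m) (cl m) i (s m) : ℝ)⁻¹ ≤ a m ^ δ := fun m i hi => by
    rw [← inv_inv (a m ^ δ), ← Real.rpow_neg (hapos m).le]
    exact inv_anti₀ (Real.rpow_pos_of_pos (hapos m) _) (Finset.mem_filter.1 hi).2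
  have hsign := hconv (fun m => signOutcome (designMeasure (C m) p) Ybar (w m <| dvec (cl m) ·))
    (fun m => geomInterf_signOutcome (hρ m) hη.le hK₁.le) (fun m => abs_signOutcome_le hYbar.le)
    (fun m => linearPO_affineOutcome _ _)
  simp only [signOutcome_apply, age_signOutcome, sub_zero] at hsign
  obtain ⟨B₁, hmean⟩ :=
    eventually_sum_abs_integral_le (fun m i => MemLp.of_discrete) hYbar hsd ha0 hsign
  obtain ⟨M, hM, h₁⟩ := (hconv (fun m => adversary (ρ m) (cl m) p (s m) (c m) (bad m))
    (fun m => geomInterf_adversary (hρ m) hη.le (hs m) (hc m).le (hcs m))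
    (fun m i d => (abs_adversary_le (hρ m) (hs m).le (hc m).le i d).trans (min_le_right _ _))
    (fun m => linearPO_affineOutcome _ _)).exists_eventually_lt one_half_pos
  simp_rw [Finset.sum_boole]
  refine tendsto_order.2 ⟨fun r hr => .of_forall fun m => hr.trans_le (by positivity),
    fun r hr => ?_⟩
  have hsmall : Tendsto (fun m => √(a m ^ δ) * (B₁ + B₂)) atTop (𝓝 0) := by
    simpa [Real.zero_rpow hδ.ne'] using
      (ha0.rpow_const (Or.inr hδ.le)).sqrt.mul_const (B₁ + B₂)
  filter_upwards [hmean, h₁, hsmall.eventually (gt_mem_nhds (by positivity : (0 : ℝ) < r / 4)),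
    eventually_mul_le_min_mul_rpow ha0 hapos (mul_pos hε hη) hK₁ hYbar
      (by positivity : 0 < 4 * M / r)] with m hm hprob hv hrate
  refine card_div_lt_of_measureReal_lt (hρ m) (hs m).le (hc m) (hbad m) _ hm (hsd m) hv ?_ hprob
  calc M * a m = 4 * M / r * a m * r / 4 := by field_simp
    _ ≤ c m * r / 4 := by gcongr

/-- Lemma 1: if a linear estimator paired with a cluster-randomized design
converges at rate `a_n` for every potential outcome in the class, then the fraction of
units whose `a_n^{-1/η+ε}`-neighborhood intersects at least `a_n^{-δ}` clusters vanishes. -/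
theorem subsample_lemma
    (η K₁ Ybar p : ℝ)
    (hη : 0 < η) (hK₁ : 0 < K₁) (hYbar : 0 < Ybar)
    (hp0 : 0 < p) (hp1 : p < 1)
    (ρ : ∀ m : ℕ, Fin m → Fin m → ℝ) (hρ : ∀ m, DistOK (ρ m))
    (C : ℕ → ℕ) (cl : ∀ m : ℕ, Fin m → Fin (C m))
    -- linear estimator with weights of uniformly summable standard deviations
    (w : ∀ m : ℕ, (Fin m → Bool) → Fin m → ℝ)
    (hw : ∃ B : ℝ, ∀ m : ℕ,
      ∑ i : Fin m, Real.sqrt (variance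
          (fun x : Fin (C m) → Bool => w m (dvec (cl m) x) i)
          (designMeasure (C m) p)) ≤ B)
    -- the rate sequence
    (a : ℕ → ℝ) (hapos : ∀ m, 0 < a m)
    (ha0 : Filter.Tendsto a Filter.atTop (𝓝 0))
    -- O_p(a_n) convergence for every admissible potential outcome sequence
    (hconv : ∀ Y : ∀ m : ℕ, Fin m → (Fin m → Bool) → ℝ,
      (∀ m, GeomInterf (ρ m) K₁ η (Y m)) →
      (∀ m (i : Fin m) (d : Fin m → Bool), |Y m i d| ≤ Ybar) →
      (∀ m, LinearPO (Y m)) →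
      IsBigOp (fun m => designMeasure (C m) p)
        (fun m x => (∑ i, Y m i (dvec (cl m) x) * w m (dvec (cl m) x) i) - age (Y m))
        a) :
    ∀ ε δ : ℝ, 0 < ε → ε < 1 / η → 0 < δ →
      Filter.Tendsto (fun m : ℕ =>
        (∑ i : Fin m, if a m ^ (-δ) ≤ ((phi (ρ m) (cl m) i (a m ^ (-(1 / η) + ε)) : ℝ))
          then (1 : ℝ) else 0) / m)
        Filter.atTop (𝓝 0) :=
  subsample_lemma_general η K₁ Ybar p hη hK₁ hYbar ρ hρ C cl w hw a hapos ha0 hconv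

end AGEPaper
end
end

section
/- Under a cluster-randomized design with parameter p ∈ (0,1) and bounded outcomes |Y_i(d)| ≤ Ȳ, the oracle estimator θ̃_{n,κ} = (1/n)·Σ_i [ Y_i(𝟏)·T_{i1}/p^{φ_n(i,κ)} − Y_i(𝟎)·T_{i0}/(1−p)^{φ_n(i,κ)} ] has variance bounded by Var(θ̃_{n,κ}) ≤ Ȳ²·Σ_{c=1}^{C_n} γ_n(c,κ)² / ( n²·(p(1−p))^{2φ_n(κ)} ). -/
open MeasureTheory ProbabilityTheory Filter
open scoped ENNReal NNReal BigOperators Classical Topology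

noncomputable section

namespace AGEPaper

variable {n C : ℕ}

/-!
Write `θ̃ = n⁻¹ ∑ᵢ Wᵢ`, where `Wᵢ` only depends on the treatments of the clusters meeting
`𝒩(i,κ)`. Under the product design `Wᵢ` and `Wⱼ` are independent when these cluster sets are
disjoint. Otherwise both are nonempty, so at most one of `T_{i1}`, `T_{i0}` is nonzero and
`|Wᵢ| ≤ Ȳ / (p(1-p))^{φ(κ)}`; hence `Var Wᵢ` and `cov(Wᵢ, Wⱼ)` are at most the square of that
bound. A pair whose cluster sets meet shares some cluster `c`, so there are at most
`∑_c γ(c,κ)²` such pairs.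
-/

section Independence

variable {ι : Type*} [Fintype ι] {Ω : ι → Type*} [∀ i, MeasurableSpace (Ω i)]
  [∀ i, Countable (Ω i)] [∀ i, MeasurableSingletonClass (Ω i)]
  {μ : ∀ i, Measure (Ω i)} [∀ i, IsProbabilityMeasure (μ i)]

theorem indepFun_pi_of_dependsOn {f g : (∀ i, Ω i) → ℝ} {S T : Finset ι} (hST : Disjoint S T)
    (hf : DependsOn f S) (hg : DependsOn g T) : IndepFun f g (Measure.pi μ) := by
  obtain ⟨F, rfl⟩ := dependsOn_iff_exists_comp.mp hf
  obtain ⟨G, rfl⟩ := dependsOn_iff_exists_comp.mp hg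
  have hcoord := iIndepFun_pi (μ := μ) (X := fun _ => id) fun _ => aemeasurable_id
  exact (hcoord.indepFun_finset S T hST fun i => measurable_pi_apply i).comp
    (measurable_of_countable F) (measurable_of_countable G)

end Independence

theorem covariance_le_of_variance_le {Ω : Type*} [MeasurableSpace Ω] {μ : Measure Ω}
    [IsFiniteMeasure μ] {X Y : Ω → ℝ} (hX : MemLp X 2 μ) (hY : MemLp Y 2 μ) {v : ℝ}
    (hXv : Var[X; μ] ≤ v) (hYv : Var[Y; μ] ≤ v) : cov[X, Y; μ] ≤ v := by
  have := variance_sub hX hY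
  linarith [variance_nonneg (X - Y) μ]

section Counting

open Finset

theorem sum_sq_card_filter_mem {ι κ : Type*} [Fintype ι] [Fintype κ] [DecidableEq κ]
    (S : ι → Finset κ) :
    ∑ c, (#{i | c ∈ S i} : ℝ) ^ 2 = ∑ i, ∑ j, (#(S i ∩ S j) : ℝ) := by
  have hinter : ∀ i j, (#(S i ∩ S j) : ℝ) =
      ∑ c, (if c ∈ S i then 1 else 0) * (if c ∈ S j then 1 else 0) := by
    intro i j
    simp only [ite_zero_mul_ite_zero, one_mul, ← mem_inter, sum_boole, filter_mem_eq_inter,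
      univ_inter]
  simp_rw [hinter, sq, ← sum_boole, sum_mul_sum]
  rw [sum_comm]
  exact sum_congr rfl fun i _ => sum_comm

theorem variance_sum_le_of_covariance_eq_zero {Ω ι κ : Type*} [MeasurableSpace Ω]
    {μ : Measure Ω} [IsFiniteMeasure μ] [Fintype ι] [Fintype κ] [DecidableEq κ]
    {X : ι → Ω → ℝ} (hX : ∀ i, MemLp (X i) 2 μ) (S : ι → Finset κ) {v : ℝ}
    (hcov : ∀ i j, Disjoint (S i) (S j) → cov[X i, X j; μ] = 0)
    (hvar : ∀ i, (S i).Nonempty → Var[X i; μ] ≤ v) :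
    Var[fun ω => ∑ i, X i ω; μ] ≤ v * ∑ c, (#{i | c ∈ S i} : ℝ) ^ 2 := by
  rw [variance_fun_sum hX, sum_sq_card_filter_mem, mul_sum]
  refine sum_le_sum fun i _ => ?_
  rw [mul_sum]
  refine sum_le_sum fun j _ => ?_
  by_cases hij : Disjoint (S i) (S j)
  · rw [hcov i j hij, disjoint_iff_inter_eq_empty.mp hij, card_empty, Nat.cast_zero, mul_zero]
  · have hne := not_disjoint_iff_nonempty_inter.mp hij
    have hi := hvar i (hne.mono inter_subset_left)
    have hcard : (1 : ℝ) ≤ #(S i ∩ S j) := by exact_mod_cast hne.card_pos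
    calc cov[X i, X j; μ] ≤ v :=
          covariance_le_of_variance_le (hX i) (hX j) hi (hvar j (hne.mono inter_subset_right))
      _ ≤ v * #(S i ∩ S j) := le_mul_of_one_le_right ((variance_nonneg _ _).trans hi) hcard

end Counting

theorem mul_pow_le_pow_of_le_one {a b : ℝ} (ha0 : 0 ≤ a) (ha1 : a ≤ 1) (hb0 : 0 ≤ b)
    (hb1 : b ≤ 1) {k l : ℕ} (hkl : k ≤ l) : (a * b) ^ l ≤ a ^ k :=
  (pow_le_pow_of_le_one (mul_nonneg ha0 hb0) (mul_le_one₀ ha1 hb0 hb1) hkl).trans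
    (pow_le_pow_left₀ (mul_nonneg ha0 hb0) (mul_le_of_le_one_right ha0 hb1) k)

theorem phi_le_phiMax (ρ : Fin n → Fin n → ℝ) (cl : Fin n → Fin C) (i : Fin n) (s : ℝ) :
    phi ρ cl i s ≤ phiMax ρ cl s :=
  Finset.le_sup (f := fun i => phi ρ cl i s) (Finset.mem_univ i)

def nbhdClusters (ρ : Fin n → Fin n → ℝ) (cl : Fin n → Fin C) (i : Fin n) (s : ℝ) :
    Finset (Fin C) :=
  Finset.univ.filter fun c => ∃ j ∈ nbhd ρ i s, cl j = c

open Finset in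
theorem card_filter_mem_nbhdClusters (ρ : Fin n → Fin n → ℝ) (cl : Fin n → Fin C) (c : Fin C)
    (s : ℝ) : #{i | c ∈ nbhdClusters ρ cl i s} = gam ρ cl c s := by
  simp [nbhdClusters, gam]

def oracleTerm (ρ : Fin n → Fin n → ℝ) (cl : Fin n → Fin C) (p κ : ℝ)
    (Y : Fin n → (Fin n → Bool) → ℝ) (i : Fin n) (x : Fin C → Bool) : ℝ :=
  Y i (fun _ => true) * Tind ρ cl κ i true x / p ^ phi ρ cl i κ
    - Y i (fun _ => false) * Tind ρ cl κ i false x / (1 - p) ^ phi ρ cl i κ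

section OracleTerm

variable {ρ : Fin n → Fin n → ℝ} {cl : Fin n → Fin C} {p κ : ℝ}
  {Y : Fin n → (Fin n → Bool) → ℝ} {i : Fin n}

theorem oracle_eq_inv_mul_sum :
    oracle ρ cl p κ Y = fun x => (n : ℝ)⁻¹ * ∑ i, oracleTerm ρ cl p κ Y i x := by
  funext x
  rw [oracle, div_eq_inv_mul]
  rfl

theorem dependsOn_Tind (t : Bool) :
    DependsOn (Tind ρ cl κ i t) (nbhdClusters ρ cl i κ : Set (Fin C)) := by
  intro x y hxy
  have hcl : ∀ j ∈ nbhd ρ i κ, x (cl j) = y (cl j) := fun j hj =>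
    hxy _ (Finset.mem_filter.mpr ⟨Finset.mem_univ _, j, hj, rfl⟩)
  have : allTreat ρ cl κ i t x ↔ allTreat ρ cl κ i t y :=
    forall₂_congr fun j hj => by rw [hcl j hj]
  simp only [Tind, this]

theorem dependsOn_oracleTerm :
    DependsOn (oracleTerm ρ cl p κ Y i) (nbhdClusters ρ cl i κ : Set (Fin C)) := by
  intro x y hxy
  simp only [oracleTerm, dependsOn_Tind true hxy, dependsOn_Tind false hxy]

theorem abs_oracleTerm_le (hp0 : 0 < p) (hp1 : p < 1) (hne : (nbhdClusters ρ cl i κ).Nonempty)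
    {Ybar : ℝ} (hY : ∀ d, |Y i d| ≤ Ybar) (x : Fin C → Bool) :
    |oracleTerm ρ cl p κ Y i x| ≤ Ybar / (p * (1 - p)) ^ phiMax ρ cl κ := by
  obtain ⟨c, hc⟩ := hne
  obtain ⟨j, hj, -⟩ := (Finset.mem_filter.mp hc).2
  have hpos : 0 < (p * (1 - p)) ^ phiMax ρ cl κ := by
    have : 0 < 1 - p := sub_pos.mpr hp1
    positivity
  have hφ := phi_le_phiMax ρ cl i κ
  have hq0 : 0 ≤ 1 - p := sub_nonneg.mpr hp1.le
  have hYbar : 0 ≤ Ybar := (abs_nonneg _).trans (hY fun _ => true)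
  unfold oracleTerm Tind
  split_ifs with h1 h0 h0
  · exact nomatch (h1 j hj).symm.trans (h0 j hj)
  · rw [mul_one, mul_zero, zero_div, sub_zero, abs_div, abs_of_pos (pow_pos hp0 _)]
    exact div_le_div₀ hYbar (hY _) hpos
      (mul_pow_le_pow_of_le_one hp0.le hp1.le hq0 (by linarith) hφ)
  · rw [mul_one, mul_zero, zero_div, zero_sub, abs_neg, abs_div,
      abs_of_pos (pow_pos (sub_pos.mpr hp1) _)]
    refine div_le_div₀ hYbar (hY _) hpos ?_
    rw [mul_comm p]
    exact mul_pow_le_pow_of_le_one hq0 (by linarith) hp0.le hp1.le hφ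
  · simpa using div_nonneg hYbar hpos.le

theorem variance_oracleTerm_le (hp0 : 0 < p) (hp1 : p < 1)
    (hne : (nbhdClusters ρ cl i κ).Nonempty) {Ybar : ℝ} (hY : ∀ d, |Y i d| ≤ Ybar) :
    Var[oracleTerm ρ cl p κ Y i; designMeasure C p] ≤
      (Ybar / (p * (1 - p)) ^ phiMax ρ cl κ) ^ 2 := by
  have hbound := variance_le_sq_of_bounded (μ := designMeasure C p)
    (a := -(Ybar / (p * (1 - p)) ^ phiMax ρ cl κ))
    (ae_of_all _ fun x => abs_le.mp (abs_oracleTerm_le hp0 hp1 hne hY x))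
    (measurable_of_countable _).aemeasurable
  rwa [sub_neg_eq_add, add_self_div_two] at hbound

theorem covariance_oracleTerm_eq_zero {j : Fin n}
    (hij : Disjoint (nbhdClusters ρ cl i κ) (nbhdClusters ρ cl j κ)) :
    cov[oracleTerm ρ cl p κ Y i, oracleTerm ρ cl p κ Y j; designMeasure C p] = 0 :=
  (indepFun_pi_of_dependsOn hij dependsOn_oracleTerm dependsOn_oracleTerm).covariance_eq_zero
    .of_discrete .of_discrete

end OracleTerm

theorem oracle_variance_bound_general
    (m Cm : ℕ)
    (ρ : Fin m → Fin m → ℝ)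
    (cl : Fin m → Fin Cm)
    (Y : Fin m → (Fin m → Bool) → ℝ)
    (Ybar : ℝ)
    (hbd : ∀ (i : Fin m) (d : Fin m → Bool), |Y i d| ≤ Ybar)
    (p κ : ℝ) (hp0 : 0 < p) (hp1 : p < 1) :
    variance (oracle ρ cl p κ Y) (designMeasure Cm p) ≤
      Ybar ^ 2 * (∑ c : Fin Cm, ((gam ρ cl c κ : ℝ)) ^ 2) /
        ((m : ℝ) ^ 2 * (p * (1 - p)) ^ (2 * phiMax ρ cl κ)) := by
  have hsum := variance_sum_le_of_covariance_eq_zero (fun _ => .of_discrete)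
    (nbhdClusters ρ cl · κ) (fun i j => covariance_oracleTerm_eq_zero)
    (fun i hi => variance_oracleTerm_le hp0 hp1 hi (hbd i))
  simp only [card_filter_mem_nbhdClusters] at hsum
  rw [oracle_eq_inv_mul_sum, variance_const_mul]
  calc (m : ℝ)⁻¹ ^ 2 * Var[fun x => ∑ i, oracleTerm ρ cl p κ Y i x; designMeasure Cm p]
      ≤ (m : ℝ)⁻¹ ^ 2 * ((Ybar / (p * (1 - p)) ^ phiMax ρ cl κ) ^ 2 *
          ∑ c : Fin Cm, ((gam ρ cl c κ : ℝ)) ^ 2) := by gcongr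
    _ = _ := by rw [div_pow, ← pow_mul, mul_comm (phiMax ρ cl κ) 2]; ring

/-- variance bound for the oracle estimator under a cluster-randomized
design with bounded outcomes. -/
theorem oracle_variance_bound
    (m Cm : ℕ) (hm : 0 < m)
    (ρ : Fin m → Fin m → ℝ) (hρ : DistOK ρ)
    (cl : Fin m → Fin Cm)
    (Y : Fin m → (Fin m → Bool) → ℝ)
    (Ybar : ℝ) (hYbar : 0 < Ybar)
    (hbd : ∀ (i : Fin m) (d : Fin m → Bool), |Y i d| ≤ Ybar)
    (p κ : ℝ) (hp0 : 0 < p) (hp1 : p < 1) :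
    variance (oracle ρ cl p κ Y) (designMeasure Cm p) ≤
      Ybar ^ 2 * (∑ c : Fin Cm, ((gam ρ cl c κ : ℝ)) ^ 2) /
        ((m : ℝ) ^ 2 * (p * (1 - p)) ^ (2 * phiMax ρ cl κ)) :=
  oracle_variance_bound_general m Cm ρ cl Y Ybar hbd p κ hp0 hp1

end AGEPaper
end
end

section
/- Under a cluster-randomized design with parameter p ∈ (0,1) and geometric interference with constants K₁, η, the Horvitz-Thompson estimator θ̂^{HT}_{n,κ} = (1/n)·Σ_i Y_i·( T_{i1}/p^{φ_n(i,κ)} − T_{i0}/(1−p)^{φ_n(i,κ)} ) and the oracle estimator θ̃_{n,κ} = (1/n)·Σ_i [ Y_i(𝟏)·T_{i1}/p^{φ_n(i,κ)} − Y_i(𝟎)·T_{i0}/(1−p)^{φ_n(i,κ)} ] satisfy, almost surely, |θ̃_{n,κ} − θ̂^{HT}_{n,κ}| ≤ 2·K₁·κ^{−η} / (p(1−p))^{φ_n(κ)}. -/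
/-!
When `T_{it} = 1` the `κ`-neighborhood of `i` is saturated with treatment `t`, so `s̃_i(d) ≥ κ`
and geometric interference gives `|Y_i(d) - Y_i(t𝟏)| ≤ K₁ κ^{-η}`; otherwise the `t`-summands of
both estimators vanish. The weights `p^{-φ(i,κ)}` and `(1-p)^{-φ(i,κ)}` are both at most
`(p(1-p))^{-φ(κ)}`, so each unit contributes at most `2 K₁ κ^{-η} / (p(1-p))^{φ(κ)}`.
-/

open MeasureTheory ProbabilityTheory Filter
open scoped ENNReal NNReal BigOperators Classical Topology

noncomputable section

namespace AGEPaper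

variable {n C : ℕ}

section Interference

variable {ρ : Fin n → Fin n → ℝ} {i : Fin n} {s : ℝ} {d : Fin n → Bool}

lemma mem_nbhd_self (hρi : ρ i i = 0) (hs : 0 ≤ s) : i ∈ nbhd ρ i s := by
  simp [nbhd, hρi, hs]

/-- Once `s` exceeds every distance from `i`, a saturated `s`-neighborhood forces `d` to be
constant. -/
lemma bddAbove_saturated_radii (hd : ∃ j k, d j ≠ d k) :
    BddAbove {s : ℝ | 0 < s ∧
      ((∀ j ∈ nbhd ρ i s, d j = true) ∨ (∀ j ∈ nbhd ρ i s, d j = false))} := by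
  obtain ⟨M, hM⟩ := (Set.finite_range (ρ i)).bddAbove
  refine ⟨M, fun s ⟨_, hsat⟩ => not_lt.1 fun hMs => ?_⟩
  have hall : ∀ j, j ∈ nbhd ρ i s := fun j => by
    simpa [nbhd] using (hM (Set.mem_range_self j)).trans hMs.le
  obtain ⟨j, k, hjk⟩ := hd
  rcases hsat with h | h <;> exact hjk ((h j (hall j)).trans (h k (hall k)).symm)

lemma le_stilde {t : Bool} (hs : 0 < s) (hsat : ∀ j ∈ nbhd ρ i s, d j = t)
    (hd : ∃ j k, d j ≠ d k) : s ≤ stilde ρ d i := by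
  refine le_csSup (bddAbove_saturated_radii hd) ⟨hs, ?_⟩
  cases t
  · exact Or.inr hsat
  · exact Or.inl hsat

theorem abs_sub_global_le_of_saturated {Y : Fin n → (Fin n → Bool) → ℝ} {K₁ η : ℝ}
    (hGI : GeomInterf ρ K₁ η Y) (hK₁ : 0 ≤ K₁) (hη : 0 ≤ η) (hρi : ρ i i = 0) (hs : 0 < s)
    {t : Bool} (hsat : ∀ j ∈ nbhd ρ i s, d j = t) :
    |Y i d - Y i (fun _ => t)| ≤ K₁ * s ^ (-η) := by
  have hdi : d i = t := hsat i (mem_nbhd_self hρi hs.le)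
  by_cases hconst : ∀ j k, d j = d k
  · obtain rfl : d = fun _ => t := funext fun j => (hconst j i).trans hdi
    simpa using by positivity
  push Not at hconst
  calc |Y i d - Y i (fun _ => t)|
      = |Y i d - if d i then Y i (fun _ => true) else Y i (fun _ => false)| := by
        rw [hdi]; cases t <;> rfl
    _ ≤ K₁ * stilde ρ d i ^ (-η) := hGI i d
    _ ≤ K₁ * s ^ (-η) := mul_le_mul_of_nonneg_left
        (Real.rpow_le_rpow_of_nonpos hs (le_stilde hs hsat hconst) (neg_nonpos.2 hη)) hK₁

end Interference

theorem abs_sub_global_mul_Tind_le {ρ : Fin n → Fin n → ℝ} {cl : Fin n → Fin C}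
    {Y : Fin n → (Fin n → Bool) → ℝ} {K₁ η κ : ℝ} (hρ : ∀ i, ρ i i = 0)
    (hGI : GeomInterf ρ K₁ η Y) (hK₁ : 0 ≤ K₁) (hη : 0 ≤ η) (hκ : 0 < κ)
    (x : Fin C → Bool) (i : Fin n) (t : Bool) :
    |(Y i (fun _ => t) - Y i (dvec cl x)) * Tind ρ cl κ i t x| ≤ K₁ * κ ^ (-η) := by
  unfold Tind
  split_ifs with hsat
  · rw [mul_one, abs_sub_comm]
    exact abs_sub_global_le_of_saturated hGI hK₁ hη (hρ i) hκ hsat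
  · simpa using by positivity

lemma pow_mul_le_pow_left {a b : ℝ} (ha₀ : 0 ≤ a) (ha₁ : a ≤ 1) (hb₀ : 0 ≤ b) (hb₁ : b ≤ 1)
    {k N : ℕ} (hkN : k ≤ N) : (a * b) ^ N ≤ a ^ k :=
  (pow_le_pow_left₀ (mul_nonneg ha₀ hb₀) (mul_le_of_le_one_right ha₀ hb₁) N).trans
    (pow_le_pow_of_le_one ha₀ ha₁ hkN)

lemma abs_oracle_summand_sub_le {a₁ a₀ y T₁ T₀ P Q D c : ℝ}
    (h₁ : |(a₁ - y) * T₁| ≤ c) (h₀ : |(a₀ - y) * T₀| ≤ c)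
    (hD : 0 < D) (hDP : D ≤ P) (hDQ : D ≤ Q) :
    |(a₁ * T₁ / P - a₀ * T₀ / Q) - y * (T₁ / P - T₀ / Q)| ≤ 2 * c / D := by
  have hc : 0 ≤ c := (abs_nonneg _).trans h₁
  have hP : 0 < P := hD.trans_le hDP
  have hQ : 0 < Q := hD.trans_le hDQ
  calc |(a₁ * T₁ / P - a₀ * T₀ / Q) - y * (T₁ / P - T₀ / Q)|
      = |(a₁ - y) * T₁ / P - (a₀ - y) * T₀ / Q| := by congr 1; ring
    _ ≤ |(a₁ - y) * T₁ / P| + |(a₀ - y) * T₀ / Q| := abs_sub _ _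
    _ = |(a₁ - y) * T₁| / P + |(a₀ - y) * T₀| / Q := by
        rw [abs_div, abs_div, abs_of_pos hP, abs_of_pos hQ]
    _ ≤ c / D + c / D := by gcongr
    _ = 2 * c / D := by ring

lemma abs_sum_div_sub_sum_div_le {f g : Fin n → ℝ} {B : ℝ} (hB : 0 ≤ B)
    (h : ∀ i, |f i - g i| ≤ B) : |(∑ i, f i) / n - (∑ i, g i) / n| ≤ B := by
  rw [← sub_div, ← Finset.sum_sub_distrib, abs_div, Nat.abs_cast]
  refine div_le_of_le_mul₀ n.cast_nonneg hB ?_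
  calc |∑ i, (f i - g i)| ≤ ∑ i, |f i - g i| := Finset.abs_sum_le_sum_abs _ _
    _ ≤ ∑ _i : Fin n, B := Finset.sum_le_sum fun i _ => h i
    _ = B * n := by simp [mul_comm]

theorem oracle_ht_close_general
    (m Cm : ℕ)
    (ρ : Fin m → Fin m → ℝ) (hρ : DistOK ρ)
    (cl : Fin m → Fin Cm)
    (Y : Fin m → (Fin m → Bool) → ℝ)
    (K₁ η : ℝ) (hK₁ : 0 < K₁) (hη : 0 < η)
    (hGI : GeomInterf ρ K₁ η Y)
    (p κ : ℝ) (hp0 : 0 < p) (hp1 : p < 1) (hκ : 0 < κ) :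
    ∀ᵐ x ∂ designMeasure Cm p,
      |oracle ρ cl p κ Y x - htEstP ρ cl p κ Y x| ≤
        2 * K₁ * κ ^ (-η) / (p * (1 - p)) ^ phiMax ρ cl κ := by
  refine ae_of_all _ fun x => ?_
  have hq : 0 < 1 - p := sub_pos.2 hp1
  refine abs_sum_div_sub_sum_div_le (by positivity) fun i => ?_
  have hφ : phi ρ cl i κ ≤ phiMax ρ cl κ :=
    Finset.le_sup (f := fun i => phi ρ cl i κ) (Finset.mem_univ i)
  have hterm (t : Bool) := abs_sub_global_mul_Tind_le hρ.1 (cl := cl) hGI hK₁.le hη.le hκ x i t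
  rw [mul_assoc]
  exact abs_oracle_summand_sub_le (hterm true) (hterm false) (by positivity)
    (pow_mul_le_pow_left hp0.le hp1.le hq.le (by linarith) hφ)
    (mul_comm p (1 - p) ▸ pow_mul_le_pow_left hq.le (by linarith) hp0.le hp1.le hφ)

/-- the oracle and Horvitz–Thompson estimators are almost surely within
`2K₁κ^{-η}/(p(1-p))^{φ_n(κ)}` of each other under geometric interference. -/
theorem oracle_ht_close
    (m Cm : ℕ) (hm : 0 < m)
    (ρ : Fin m → Fin m → ℝ) (hρ : DistOK ρ)
    (cl : Fin m → Fin Cm)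
    (Y : Fin m → (Fin m → Bool) → ℝ)
    (K₁ η : ℝ) (hK₁ : 0 < K₁) (hη : 0 < η)
    (hGI : GeomInterf ρ K₁ η Y)
    (p κ : ℝ) (hp0 : 0 < p) (hp1 : p < 1) (hκ : 0 < κ) :
    ∀ᵐ x ∂ designMeasure Cm p,
      |oracle ρ cl p κ Y x - htEstP ρ cl p κ Y x| ≤
        2 * K₁ * κ ^ (-η) / (p * (1 - p)) ^ phiMax ρ cl κ :=
  oracle_ht_close_general m Cm ρ hρ cl Y K₁ η hK₁ hη hGI p κ hp0 hp1 hκ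

end AGEPaper
end
end
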